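/- If a synchronizing automaton 𝒜 with n ≥ 2 states is semisimple, then Fs(𝒜) ∖ Rad(𝒜) ≠ ∅; consequently min{Rnk(ℐ_i) : i ∈ [1,k]} = Fr(𝒜). -/

import Mathlib

open scoped BigOperators

set_option synthInstance.maxHeartbeats 1000000
set_option maxHeartbeats 1000000

noncomputable section

/-- Action of a word on a state: `q · u`. -/
def actW {Q A : Type*} (δ : Q → A → Q) (q : Q) (u : List A) : Q :=
  u.foldl δ q

/-- The image `Q · u` of the full state set under a word. -/
def imageSet {Q A : Type*} [Fintype Q] [DecidableEq Q] (δ : Q → A → Q) (u : List A) :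
    Finset Q :=
  Finset.image (fun q => actW δ q u) Finset.univ

/-- The rank `rk(u) = |Q · u|` of a word. -/
def wordRank {Q A : Type*} [Fintype Q] [DecidableEq Q] (δ : Q → A → Q) (u : List A) : ℕ :=
  (imageSet δ u).card

/-- A word is reset (synchronizing) if `|Q · u| = 1`. -/
def IsReset {Q A : Type*} [Fintype Q] [DecidableEq Q] (δ : Q → A → Q) (u : List A) : Prop :=
  wordRank δ u = 1

/-- The automaton is synchronizing if it admits a reset word. -/
def IsSynchronizing {Q A : Type*} [Fintype Q] [DecidableEq Q] (δ : Q → A → Q) : Prop :=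
  ∃ u : List A, IsReset δ u

/-- `Syn(𝒜)`, the set of reset words. -/
def SynWords {Q A : Type*} [Fintype Q] [DecidableEq Q] (δ : Q → A → Q) : Set (List A) :=
  {u | IsReset δ u}

/-- The hyperplane `w⊥ = {v ∈ ℂQ : ∑ q, v q = 0}`. -/
def Wperp (Q : Type*) [Fintype Q] : Submodule ℂ (Q → ℂ) :=
  LinearMap.ker (∑ q : Q, (LinearMap.proj q : (Q → ℂ) →ₗ[ℂ] ℂ))

theorem mem_Wperp {Q : Type*} [Fintype Q] (v : Q → ℂ) :
    v ∈ Wperp Q ↔ ∑ q : Q, v q = 0 := by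
  simp [Wperp, LinearMap.mem_ker, LinearMap.sum_apply]

/-- The (right) action of a word on row vectors `v ↦ v·π(u)`. -/
def piLin {Q A : Type*} [Fintype Q] [DecidableEq Q] (δ : Q → A → Q) (u : List A) :
    (Q → ℂ) →ₗ[ℂ] (Q → ℂ) where
  toFun v := fun p => ∑ q ∈ Finset.univ.filter (fun q => actW δ q u = p), v q
  map_add' := by
    intro a b; funext p; simp [Finset.sum_add_distrib]
  map_smul' := by
    intro c v; funext p; simp [Finset.mul_sum]

theorem piLin_mem {Q A : Type*} [Fintype Q] [DecidableEq Q] (δ : Q → A → Q) (u : List A) :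
    ∀ v ∈ Wperp Q, piLin δ u v ∈ Wperp Q := by
  intro v hv
  rw [mem_Wperp] at hv ⊢
  have h := Finset.sum_fiberwise (Finset.univ : Finset Q) (fun q => actW δ q u) v
  calc ∑ p : Q, piLin δ u v p
      = ∑ p : Q, ∑ q ∈ Finset.univ.filter (fun q => actW δ q u = p), v q := rfl
    _ = ∑ q : Q, v q := h
    _ = 0 := hv

/-- The endomorphism of `w⊥` induced by a word. -/
def rhoEnd {Q A : Type*} [Fintype Q] [DecidableEq Q] (δ : Q → A → Q) (u : List A) :
    Module.End ℂ (Wperp Q) :=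
  (piLin δ u).restrict (piLin_mem δ u)

/-- The representation `ρ : Σ* → End(w⊥)`; we record it in the multiplicative opposite so
that `ρ (u ++ v) = ρ u * ρ v` (the paper's right-action convention). -/
def rho {Q A : Type*} [Fintype Q] [DecidableEq Q] (δ : Q → A → Q) (u : List A) :
    (Module.End ℂ (Wperp Q))ᵐᵒᵖ :=
  MulOpposite.op (rhoEnd δ u)

/-- `ℛ`, the ℂ-subalgebra generated by `ρ(Σ*)`. -/
def Ralg {Q A : Type*} [Fintype Q] [DecidableEq Q] (δ : Q → A → Q) :
    Subalgebra ℂ (Module.End ℂ (Wperp Q))ᵐᵒᵖ :=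
  Algebra.adjoin ℂ (Set.range (rho δ))

/-- `ρ(u)` seen as an element of `ℛ`. -/
def rhoR {Q A : Type*} [Fintype Q] [DecidableEq Q] (δ : Q → A → Q) (u : List A) :
    Ralg δ :=
  ⟨rho δ u, Algebra.subset_adjoin (Set.mem_range_self u)⟩

/-- The Jacobson radical `Rad(ℛ)` of `ℛ`, realised as a subset of the ambient algebra via
the standard characterisation: `x ∈ Rad(ℛ)` iff `x ∈ ℛ` and for every `y ∈ ℛ` the element
`1 - y * x` is left-invertible in `ℛ`. -/
def RadSet {Q A : Type*} [Fintype Q] [DecidableEq Q] (δ : Q → A → Q) :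
    Set (Module.End ℂ (Wperp Q))ᵐᵒᵖ :=
  {x | x ∈ Ralg δ ∧ ∀ y ∈ Ralg δ, ∃ z ∈ Ralg δ, z * (1 - y * x) = 1}

/-- `Rad(𝒜)`: the set of radical words, i.e. words `u` with `ρ(u) ∈ Rad(ℛ)`. -/
def RadWords {Q A : Type*} [Fintype Q] [DecidableEq Q] (δ : Q → A → Q) : Set (List A) :=
  {u | rho δ u ∈ RadSet δ}

/-- The automaton is semisimple when `Rad(𝒜) = Syn(𝒜)`. -/
def IsSemisimple {Q A : Type*} [Fintype Q] [DecidableEq Q] (δ : Q → A → Q) : Prop :=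
  RadWords δ = SynWords δ

/-- The `t`-packing number `D(t,r,n)`: the maximum size of a family of `r`-subsets of an
`n`-set in which every `t`-subset is contained in at most one member. -/
def packingNumber (t r n : ℕ) : ℕ :=
  sSup {m | ∃ F : Finset (Finset (Fin n)), F.card = m ∧ (∀ S ∈ F, S.card = r) ∧
    ∀ T : Finset (Fin n), T.card = t → (F.filter fun S => T ⊆ S).card ≤ 1}

/-- The former-rank `Fr(𝒜)`: the least rank of a non-reset word. -/
def formerRank {Q A : Type*} [Fintype Q] [DecidableEq Q] (δ : Q → A → Q) : ℕ :=
  sInf {m | ∃ u : List A, ¬ IsReset δ u ∧ wordRank δ u = m}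

/-- `Fs(𝒜)`: the set of former-synchronizing words. -/
def Fs {Q A : Type*} [Fintype Q] [DecidableEq Q] (δ : Q → A → Q) : Set (List A) :=
  {u | wordRank δ u = formerRank δ}

/-- `θ_i(u)`: the image of `ρ(u)` in the `i`-th Wedderburn–Artin matrix component, where
`e : ℛ → ∏ i, M_{n_i}(ℂ)` is the quotient map `ψ` followed by the fixed isomorphism. -/
def theta {Q A : Type*} [Fintype Q] [DecidableEq Q] (δ : Q → A → Q) {k : ℕ} {nn : Fin k → ℕ}
    (e : Ralg δ →ₐ[ℂ] ∀ i : Fin k, Matrix (Fin (nn i)) (Fin (nn i)) ℂ)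
    (u : List A) (i : Fin k) : Matrix (Fin (nn i)) (Fin (nn i)) ℂ :=
  e (rhoR δ u) i

/-- `supp(v) = {i : θ_i(v) ≠ 0}`. -/
def suppW {Q A : Type*} [Fintype Q] [DecidableEq Q] (δ : Q → A → Q) {k : ℕ} {nn : Fin k → ℕ}
    (e : Ralg δ →ₐ[ℂ] ∀ i : Fin k, Matrix (Fin (nn i)) (Fin (nn i)) ℂ)
    (v : List A) : Set (Fin k) :=
  {i | theta δ e v i ≠ 0}

/-- `u ∈ Σ* v Σ*`, i.e. `v` is a factor of `u`. -/
def InFactor {A : Type*} (v u : List A) : Prop :=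
  ∃ a b : List A, u = a ++ v ++ b

/-- `u` is a `v`-minimal word: `u ∈ Σ*vΣ*`, `supp(u)` is nonempty, and `supp(u)` is minimal
among the nonempty supports of words in `Σ*vΣ*`. -/
def IsVMinimal {Q A : Type*} [Fintype Q] [DecidableEq Q] (δ : Q → A → Q) {k : ℕ}
    {nn : Fin k → ℕ}
    (e : Ralg δ →ₐ[ℂ] ∀ i : Fin k, Matrix (Fin (nn i)) (Fin (nn i)) ℂ)
    (v u : List A) : Prop :=
  InFactor v u ∧ (suppW δ e u).Nonempty ∧
    ∀ z : List A, InFactor v z → suppW δ e z ⊆ suppW δ e u →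
      suppW δ e z = ∅ ∨ suppW δ e z = suppW δ e u

/-- The `i`-th factor monoid `ℳ_i = θ_i(Σ*)`. -/
def factorMonoid {Q A : Type*} [Fintype Q] [DecidableEq Q] (δ : Q → A → Q) {k : ℕ}
    {nn : Fin k → ℕ}
    (e : Ralg δ →ₐ[ℂ] ∀ i : Fin k, Matrix (Fin (nn i)) (Fin (nn i)) ℂ)
    (i : Fin k) : Set (Matrix (Fin (nn i)) (Fin (nn i)) ℂ) :=
  Set.range fun u : List A => theta δ e u i

/-- A two-sided ideal of the (sub)monoid `M`. -/
def IsSetIdeal {X : Type*} [Mul X] (M I : Set X) : Prop :=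
  I ⊆ M ∧ ∀ a ∈ M, ∀ x ∈ I, a * x ∈ I ∧ x * a ∈ I

/-- `I` is a `0`-minimal (two-sided) ideal of the monoid `M`. -/
def IsZeroMinimalIdeal {X : Type*} [Mul X] [Zero X] (M I : Set X) : Prop :=
  IsSetIdeal M I ∧ (0 : X) ∈ I ∧ I ≠ {0} ∧
    ∀ J : Set X, IsSetIdeal M J → (0 : X) ∈ J → J ⊆ I → J ≠ {0} → J = I

/-- `Rnk_i(g) = min {rk(u) : θ_i(u) = g}`. -/
def rnkElt {Q A : Type*} [Fintype Q] [DecidableEq Q] (δ : Q → A → Q) {k : ℕ}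
    {nn : Fin k → ℕ}
    (e : Ralg δ →ₐ[ℂ] ∀ i : Fin k, Matrix (Fin (nn i)) (Fin (nn i)) ℂ)
    (i : Fin k) (g : Matrix (Fin (nn i)) (Fin (nn i)) ℂ) : ℕ :=
  sInf {m | ∃ u : List A, theta δ e u i = g ∧ wordRank δ u = m}

/-- `Rnk(ℐ_i) = min {Rnk_i(g) : g ∈ ℐ_i ∖ {0}}`. -/
def rnkIdeal {Q A : Type*} [Fintype Q] [DecidableEq Q] (δ : Q → A → Q) {k : ℕ}
    {nn : Fin k → ℕ}
    (e : Ralg δ →ₐ[ℂ] ∀ i : Fin k, Matrix (Fin (nn i)) (Fin (nn i)) ℂ)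
    (i : Fin k) (I : Set (Matrix (Fin (nn i)) (Fin (nn i)) ℂ)) : ℕ :=
  sInf {m | ∃ g ∈ I, g ≠ 0 ∧ rnkElt δ e i g = m}

/-- `w` `u`-represents `g`: `w ∈ Σ*uΣ*`, `θ_i(w) = g`, and either `g = 0` or `rk(w)` is
minimum among all words with the first two properties. -/
def URepresents {Q A : Type*} [Fintype Q] [DecidableEq Q] (δ : Q → A → Q) {k : ℕ}
    {nn : Fin k → ℕ}
    (e : Ralg δ →ₐ[ℂ] ∀ i : Fin k, Matrix (Fin (nn i)) (Fin (nn i)) ℂ)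
    (u : List A) (i : Fin k) (w : List A) (g : Matrix (Fin (nn i)) (Fin (nn i)) ℂ) : Prop :=
  InFactor u w ∧ theta δ e w i = g ∧
    (g = 0 ∨ ∀ w' : List A, InFactor u w' → theta δ e w' i = g → wordRank δ w ≤ wordRank δ w')

/-- The relation `σ_i` on `ℐ_i`. -/
def sigmaRel {Q A : Type*} [Fintype Q] [DecidableEq Q] (δ : Q → A → Q) {k : ℕ}
    {nn : Fin k → ℕ}
    (e : Ralg δ →ₐ[ℂ] ∀ i : Fin k, Matrix (Fin (nn i)) (Fin (nn i)) ℂ)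
    (i : Fin k) (u : List A)
    (g f : Matrix (Fin (nn i)) (Fin (nn i)) ℂ) : Prop :=
  g = f ∨ ∃ w₁ w₂ : List A, URepresents δ e u i w₁ g ∧ URepresents δ e u i w₂ f ∧
    1 < (imageSet δ w₁ ∩ imageSet δ w₂).card

/-- `T ⊆ [1,k]` is a core. -/
def IsCore {Q A : Type*} [Fintype Q] [DecidableEq Q] (δ : Q → A → Q) {k : ℕ}
    {nn : Fin k → ℕ}
    (e : Ralg δ →ₐ[ℂ] ∀ i : Fin k, Matrix (Fin (nn i)) (Fin (nn i)) ℂ)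
    (T : Set (Fin k)) : Prop :=
  ∀ x : List A, (∀ i ∈ T, theta δ e x i = 0) → ∀ i : Fin k, theta δ e x i = 0

/-- A minimal core. -/
def IsMinimalCore {Q A : Type*} [Fintype Q] [DecidableEq Q] (δ : Q → A → Q) {k : ℕ}
    {nn : Fin k → ℕ}
    (e : Ralg δ →ₐ[ℂ] ∀ i : Fin k, Matrix (Fin (nn i)) (Fin (nn i)) ℂ)
    (T : Set (Fin k)) : Prop :=
  IsCore δ e T ∧ ∀ T' : Set (Fin k), T' ⊆ T → IsCore δ e T' → T' = T

/-- An automaton congruence. -/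
def IsCongruence {Q A : Type*} (δ : Q → A → Q) (σ : Q → Q → Prop) : Prop :=
  Equivalence σ ∧ ∀ q p : Q, σ q p → ∀ u : List A, σ (actW δ q u) (actW δ p u)

/-- A simple automaton: the only congruences are the identity and the universal relation. -/
def IsSimple {Q A : Type*} (δ : Q → A → Q) : Prop :=
  ∀ σ : Q → Q → Prop, IsCongruence δ σ → σ = Eq ∨ σ = fun _ _ => True

/-! A non-reset word `u` of minimum rank `Fr` exists since `|Q| ≥ 2`, and by semisimplicity
it is not radical. Every word with a nonzero component `θ_i` is not radical, hence not reset,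
hence of rank at least `Fr`; this bounds every `Rnk(ℐ_i)` from below. Conversely `θ_j(u) ≠ 0`
for some `j`, and since `θ_j(Σ*)` spans `M_{n_j}(ℂ)`, for any nonzero `g = θ_j(v) ∈ ℐ_j` some
`g θ_j(a u b) g = θ_j(v a u b v)` is nonzero; it lies in `ℐ_j` and comes from a word of rank
at most `rk(u) = Fr`. -/

namespace Matrix

variable {ι K : Type*} [Fintype ι] [DecidableEq ι]

theorem mul_single_mul_apply [Semiring K] (g : Matrix ι ι K) (p q : ι) (c : K) :
    (g * single q p c * g) p q = g p q * c * g p q := by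
  rw [mul_apply, Finset.sum_eq_single p]
  · rw [mul_single_apply_same]
  · intro r _ hr
    rw [mul_single_apply_of_ne _ _ _ _ _ hr, zero_mul]
  · simp

/-- A full matrix algebra is a prime ring, even relative to a spanning set of multipliers. -/
theorem exists_mul_mul_mul_ne_zero [Field K] {S : Set (Matrix ι ι K)}
    (hS : Submodule.span K S = ⊤) {f g : Matrix ι ι K} (hf : f ≠ 0) (hg : g ≠ 0) :
    ∃ x ∈ S, ∃ y ∈ S, g * (x * f * y) * g ≠ 0 := by
  by_contra! h
  obtain ⟨p₀, hp₀⟩ := Function.ne_iff.mp hf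
  obtain ⟨q₀, hpq₀⟩ := Function.ne_iff.mp hp₀
  obtain ⟨p, hp⟩ := Function.ne_iff.mp hg
  obtain ⟨q, hpq⟩ := Function.ne_iff.mp hp
  let B : Matrix ι ι K →ₗ[K] Matrix ι ι K →ₗ[K] Matrix ι ι K :=
    LinearMap.mk₂ K (fun x y => g * (x * f * y) * g)
      (fun _ _ _ => by noncomm_ring) (fun _ _ _ => by simp)
      (fun _ _ _ => by noncomm_ring) (fun _ _ _ => by simp)
  have hB : B = 0 :=
    LinearMap.ext_on hS fun x hx => LinearMap.ext_on hS fun y hy => h x hx y hy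
  have hentry :=
    congrFun (congrFun (LinearMap.congr_fun₂ hB (single q p₀ 1) (single q₀ p 1)) p) q
  simp only [B, LinearMap.mk₂_apply, single_mul_mul_single, one_mul, mul_one,
    mul_single_mul_apply, LinearMap.zero_apply, zero_apply] at hentry
  exact mul_ne_zero (mul_ne_zero hpq hpq₀) hpq hentry

end Matrix

theorem IsZeroMinimalIdeal.exists_ne_zero {X : Type*} [Mul X] [Zero X] {M I : Set X}
    (hI : IsZeroMinimalIdeal M I) : ∃ g ∈ I, g ≠ 0 := by
  by_contra! h
  exact hI.2.2.1 (Set.eq_singleton_iff_unique_mem.mpr ⟨hI.2.1, h⟩)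

theorem actW_append {Q A : Type*} (δ : Q → A → Q) (q : Q) (a b : List A) :
    actW δ q (a ++ b) = actW δ (actW δ q a) b :=
  List.foldl_append ..

section Automaton

variable {Q A : Type*} [Fintype Q] [DecidableEq Q] (δ : Q → A → Q)

theorem wordRank_nil : wordRank δ ([] : List A) = Fintype.card Q := by
  simp [wordRank, imageSet, actW, Finset.card_univ]

theorem wordRank_append_append_le (x u z : List A) :
    wordRank δ (x ++ u ++ z) ≤ wordRank δ u := by
  have h : imageSet δ (x ++ u ++ z) ⊆ (imageSet δ u).image (fun p => actW δ p z) := by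
    intro p hp
    simp only [imageSet, Finset.mem_image] at hp ⊢
    obtain ⟨q, -, rfl⟩ := hp
    exact ⟨actW δ (actW δ q x) u, ⟨actW δ q x, Finset.mem_univ _, rfl⟩, by
      rw [actW_append, actW_append]⟩
  exact (Finset.card_le_card h).trans Finset.card_image_le

theorem exists_not_isReset_wordRank_eq_formerRank (hn : 2 ≤ Fintype.card Q) :
    ∃ u : List A, ¬ IsReset δ u ∧ wordRank δ u = formerRank δ := by
  have hne : {m | ∃ u : List A, ¬ IsReset δ u ∧ wordRank δ u = m}.Nonempty :=
    ⟨_, [], by rw [IsReset, wordRank_nil]; omega, rfl⟩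
  exact Nat.sInf_mem hne

theorem piLin_append (a b : List A) :
    piLin δ (a ++ b) = (piLin δ b).comp (piLin δ a) := by
  apply LinearMap.ext; intro v; funext p
  show (∑ q ∈ Finset.univ.filter (fun q => actW δ q (a ++ b) = p), v q)
      = ∑ q ∈ Finset.univ.filter (fun q => actW δ q b = p),
          ∑ r ∈ Finset.univ.filter (fun r => actW δ r a = q), v r
  rw [Finset.sum_fiberwise_eq_sum_filter]
  refine Finset.sum_congr (Finset.filter_congr fun q _ => ?_) fun _ _ => rfl
  simp [actW_append]

theorem piLin_nil : piLin δ ([] : List A) = LinearMap.id := by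
  apply LinearMap.ext; intro v; funext p
  show (∑ q ∈ Finset.univ.filter (fun q => q = p), v q) = v p
  rw [Finset.filter_eq', if_pos (Finset.mem_univ p), Finset.sum_singleton]

theorem rhoR_append (a b : List A) : rhoR δ (a ++ b) = rhoR δ a * rhoR δ b := by
  apply Subtype.ext
  apply MulOpposite.unop_injective
  ext v : 2
  exact LinearMap.congr_fun (piLin_append δ a b) v

theorem rhoR_nil : rhoR δ ([] : List A) = 1 := by
  apply Subtype.ext
  apply MulOpposite.unop_injective
  ext v : 2
  exact LinearMap.congr_fun (piLin_nil δ) v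

theorem span_range_rhoR : Submodule.span ℂ (Set.range (rhoR δ)) = ⊤ := by
  have hpre : ((↑) : Ralg δ → _) ⁻¹' Set.range (rho δ) = Set.range (rhoR δ) := by
    ext x
    exact ⟨fun ⟨u, hu⟩ => ⟨u, Subtype.ext hu⟩,
      fun ⟨u, hu⟩ => ⟨u, congrArg Subtype.val hu⟩⟩
  have hclosed : (Submonoid.closure (Set.range (rhoR δ)) : Set (Ralg δ)) = Set.range (rhoR δ) :=
    Set.Subset.antisymm
      (fun _ hx => Submonoid.closure_induction (fun _ hy => hy) ⟨[], rhoR_nil δ⟩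
        (fun _ _ _ _ ⟨a, ha⟩ ⟨b, hb⟩ => ⟨a ++ b, by rw [rhoR_append, ha, hb]⟩) hx)
      Submonoid.subset_closure
  have htop : Algebra.adjoin ℂ (Set.range (rhoR δ)) = ⊤ :=
    hpre ▸ Algebra.adjoin_adjoin_coe_preimage
  rw [← hclosed, ← Algebra.adjoin_eq_span, htop, Algebra.top_toSubmodule]

variable {k : ℕ} {nn : Fin k → ℕ}
  (e : Ralg δ →ₐ[ℂ] ∀ i : Fin k, Matrix (Fin (nn i)) (Fin (nn i)) ℂ)

theorem theta_append (a b : List A) (i : Fin k) :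
    theta δ e (a ++ b) i = theta δ e a i * theta δ e b i := by
  rw [theta, rhoR_append, map_mul]; rfl

theorem span_factorMonoid_eq_top (he_surj : Function.Surjective e) (i : Fin k) :
    Submodule.span ℂ (factorMonoid δ e i) = ⊤ := by
  let φ := (Pi.evalAlgHom ℂ (fun j => Matrix (Fin (nn j)) (Fin (nn j)) ℂ) i).comp e
  have hφ : Function.Surjective φ := fun X => by
    obtain ⟨x, hx⟩ := he_surj (Pi.single i X)
    exact ⟨x, by simp [φ, hx]⟩
  have himage : factorMonoid δ e i = φ.toLinearMap '' Set.range (rhoR δ) := by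
    rw [← Set.range_comp]; rfl
  rw [himage, Submodule.span_image, span_range_rhoR, Submodule.map_top,
    LinearMap.range_eq_top.mpr hφ]

theorem exists_theta_ne_zero_of_notMem_radWords
    (he_ker : ∀ x : Ralg δ, e x = 0 ↔ (x : (Module.End ℂ (Wperp Q))ᵐᵒᵖ) ∈ RadSet δ)
    {u : List A} (hu : u ∉ RadWords δ) : ∃ j, theta δ e u j ≠ 0 := by
  by_contra! h
  exact hu ((he_ker _).mp (funext h))

theorem formerRank_le_wordRank_of_theta_ne_zero
    (he_ker : ∀ x : Ralg δ, e x = 0 ↔ (x : (Module.End ℂ (Wperp Q))ᵐᵒᵖ) ∈ RadSet δ)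
    (hss : IsSemisimple δ) {w : List A} {i : Fin k} (hw : theta δ e w i ≠ 0) :
    formerRank δ ≤ wordRank δ w := by
  have hnotReset : ¬ IsReset δ w := fun hreset => by
    have hrad : w ∈ RadWords δ := hss ▸ hreset
    exact hw (congrFun ((he_ker (rhoR δ w)).mpr hrad) i)
  exact Nat.sInf_le ⟨w, hnotReset, rfl⟩

theorem formerRank_le_rnkIdeal
    (he_ker : ∀ x : Ralg δ, e x = 0 ↔ (x : (Module.End ℂ (Wperp Q))ᵐᵒᵖ) ∈ RadSet δ)
    (hss : IsSemisimple δ) {i : Fin k} {I : Set (Matrix (Fin (nn i)) (Fin (nn i)) ℂ)}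
    (hI : I ⊆ factorMonoid δ e i) {g : Matrix (Fin (nn i)) (Fin (nn i)) ℂ} (hgI : g ∈ I)
    (hg : g ≠ 0) : formerRank δ ≤ rnkIdeal δ e i I := by
  refine le_csInf ⟨_, g, hgI, hg, rfl⟩ ?_
  rintro _ ⟨g', hg'I, hg', rfl⟩
  obtain ⟨v, hv⟩ := hI hg'I
  obtain ⟨w, hw, hwr⟩ := Nat.sInf_mem (⟨_, v, hv, rfl⟩ :
    {m | ∃ u : List A, theta δ e u i = g' ∧ wordRank δ u = m}.Nonempty)
  exact (formerRank_le_wordRank_of_theta_ne_zero δ e he_ker hss (hw ▸ hg')).trans_eq hwr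

theorem rnkIdeal_le_wordRank_of_theta_ne_zero (he_surj : Function.Surjective e) {i : Fin k}
    {I : Set (Matrix (Fin (nn i)) (Fin (nn i)) ℂ)} (hI : IsSetIdeal (factorMonoid δ e i) I)
    {g : Matrix (Fin (nn i)) (Fin (nn i)) ℂ} (hgI : g ∈ I) (hg : g ≠ 0) {u : List A}
    (hu : theta δ e u i ≠ 0) : rnkIdeal δ e i I ≤ wordRank δ u := by
  obtain ⟨_, ⟨a, rfl⟩, _, ⟨b, rfl⟩, hab⟩ :=
    Matrix.exists_mul_mul_mul_ne_zero (span_factorMonoid_eq_top δ e he_surj i) hu hg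
  obtain ⟨v, rfl⟩ := hI.1 hgI
  have htheta : theta δ e (v ++ a ++ u ++ b ++ v) i
      = theta δ e v i * (theta δ e a i * theta δ e u i * theta δ e b i) * theta δ e v i := by
    simp only [theta_append, mul_assoc]
  have hmem : theta δ e (v ++ a ++ u ++ b ++ v) i ∈ I := by
    rw [htheta]
    exact (hI.2 _ ⟨v, rfl⟩ _ (hI.2 _ ⟨a ++ u ++ b, by simp only [theta_append]⟩ _ hgI).2).2
  have hrank : wordRank δ (v ++ a ++ u ++ b ++ v) ≤ wordRank δ u := by
    simpa only [List.append_assoc] using wordRank_append_append_le δ (v ++ a) u (b ++ v)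
  calc rnkIdeal δ e i I ≤ rnkElt δ e i (theta δ e (v ++ a ++ u ++ b ++ v) i) :=
        Nat.sInf_le ⟨_, hmem, htheta ▸ hab, rfl⟩
    _ ≤ wordRank δ (v ++ a ++ u ++ b ++ v) := Nat.sInf_le ⟨_, rfl, rfl⟩
    _ ≤ wordRank δ u := hrank

end Automaton

theorem stmt17_general {Q A : Type*} [Fintype Q] [DecidableEq Q] (δ : Q → A → Q)
    {k : ℕ} {nn : Fin k → ℕ}
    (e : Ralg δ →ₐ[ℂ] ∀ i : Fin k, Matrix (Fin (nn i)) (Fin (nn i)) ℂ)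
    (he_surj : Function.Surjective e)
    (he_ker : ∀ x : Ralg δ, e x = 0 ↔ (x : (Module.End ℂ (Wperp Q))ᵐᵒᵖ) ∈ RadSet δ)
    (Ii : ∀ i : Fin k, Set (Matrix (Fin (nn i)) (Fin (nn i)) ℂ))
    (hIi : ∀ i : Fin k, IsZeroMinimalIdeal (factorMonoid δ e i) (Ii i))
    (hn : 2 ≤ Fintype.card Q)
    (hss : IsSemisimple δ) :
    (Fs δ \ RadWords δ).Nonempty ∧
      sInf (Set.range fun i : Fin k => rnkIdeal δ e i (Ii i)) = formerRank δ := by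
  obtain ⟨u, hu_notReset, hu_rank⟩ := exists_not_isReset_wordRank_eq_formerRank δ hn
  have hu_notRad : u ∉ RadWords δ := hss ▸ hu_notReset
  refine ⟨⟨u, hu_rank, hu_notRad⟩, ?_⟩
  have hlower (i : Fin k) : formerRank δ ≤ rnkIdeal δ e i (Ii i) := by
    obtain ⟨g, hgI, hg⟩ := (hIi i).exists_ne_zero
    exact formerRank_le_rnkIdeal δ e he_ker hss (hIi i).1.1 hgI hg
  obtain ⟨j, hj⟩ := exists_theta_ne_zero_of_notMem_radWords δ e he_ker hu_notRad
  obtain ⟨g, hgI, hg⟩ := (hIi j).exists_ne_zero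
  have hupper : rnkIdeal δ e j (Ii j) ≤ formerRank δ :=
    hu_rank ▸ rnkIdeal_le_wordRank_of_theta_ne_zero δ e he_surj (hIi j).1 hgI hg hj
  exact le_antisymm (Nat.sInf_le ⟨j, le_antisymm hupper (hlower j)⟩)
    (le_csInf ⟨_, j, rfl⟩ (Set.forall_mem_range.mpr hlower))

theorem stmt17 {Q A : Type*} [Fintype Q] [DecidableEq Q] (δ : Q → A → Q)
    {k : ℕ} {nn : Fin k → ℕ}
    (e : Ralg δ →ₐ[ℂ] ∀ i : Fin k, Matrix (Fin (nn i)) (Fin (nn i)) ℂ)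
    (he_surj : Function.Surjective e)
    (he_ker : ∀ x : Ralg δ, e x = 0 ↔ (x : (Module.End ℂ (Wperp Q))ᵐᵒᵖ) ∈ RadSet δ)
    (Ii : ∀ i : Fin k, Set (Matrix (Fin (nn i)) (Fin (nn i)) ℂ))
    (hIi : ∀ i : Fin k, IsZeroMinimalIdeal (factorMonoid δ e i) (Ii i))
    (hIuniq : ∀ (i : Fin k) (J : Set (Matrix (Fin (nn i)) (Fin (nn i)) ℂ)),
      IsZeroMinimalIdeal (factorMonoid δ e i) J → J = Ii i)
    (hk : 0 < k) (hn : 2 ≤ Fintype.card Q) (hsync : IsSynchronizing δ)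
    (hss : IsSemisimple δ) :
    (Fs δ \ RadWords δ).Nonempty ∧
      sInf (Set.range fun i : Fin k => rnkIdeal δ e i (Ii i)) = formerRank δ :=
  stmt17_general δ e he_surj he_ker Ii hIi hn hss

end
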